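/- Let K be an algebraically closed field with char K ≠ 2, and let H(K) := (SL₂(K) × SL₂(K))/N be the central product of two copies of SL₂(K), where N is the order-2 subgroup generated by (-I,-I). Then H(K) has exactly one central element of order 2 (the image of (-I, I)), and any two non-central elements of order 2 in H(K) are conjugate in H(K). In particular H(K) has exactly two conjugacy classes of involutions. -/

import Mathlib

open Matrix MatrixGroups

instance : Fact (Even (Fintype.card (Fin 2))) := ⟨⟨1, rfl⟩⟩

/-- The subgroup generated by `(-I, -I)` in `SL₂(K) × SL₂(K)` is central, hence normal. -/
instance negOneNegOne_zpowers_normal (K : Type*) [Field K] :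
    (Subgroup.zpowers ((-1, -1) : SL(2, K) × SL(2, K))).Normal := by
  refine ⟨fun n hn g => ?_⟩
  obtain ⟨k, rfl⟩ := Subgroup.mem_zpowers_iff.mp hn
  have hc : Commute ((-1, -1) : SL(2, K) × SL(2, K)) g :=
    Prod.ext (Commute.neg_one_left g.1) (Commute.neg_one_left g.2)
  have h := hc.zpow_left k
  have : g * ((-1, -1) : SL(2, K) × SL(2, K)) ^ k * g⁻¹ = ((-1, -1)) ^ k := by
    rw [← h.eq]; group
  rw [this]
  exact Subgroup.mem_zpowers_iff.mpr ⟨k, rfl⟩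

/-!
An involution of `H(K)` lifts to `(a, b)` with `a² = b² = 1` or `a² = b² = -1` in `SL₂(K)`. In
characteristic `≠ 2` the only square roots of `1` in `SL₂(K)` are `±1`, so in the first case the
involution is `1` or the image of `(-1, 1)`. In the second case neither `a` nor `b` is `±1`, so the
involution is not central: centrality in `H(K)` is tested componentwise, since `b ≠ -b`. Over an
algebraically closed field every such `a` is conjugate in `SL₂(K)` to the Weyl element
`w = !![0, 1; -1, 0]`, hence every non-central involution is conjugate to the image of `(w, w)`.
-/

theorem Subgroup.mem_zpowers_iff_of_sq_eq_one {G : Type*} [Group G] {c g : G} (hc : c ^ 2 = 1) :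
    g ∈ Subgroup.zpowers c ↔ g = 1 ∨ g = c := by
  constructor
  · rintro ⟨k, rfl⟩
    simp only [zpow_eq_zpow_emod' k hc]
    rcases Int.emod_two_eq_zero_or_one k with hk | hk <;> simp [hk]
  · rintro (rfl | rfl)
    · exact one_mem _
    · exact Subgroup.mem_zpowers _

theorem Prod.isConj_mk {G H : Type*} [Group G] [Group H] {a a' : G} {b b' : H}
    (ha : IsConj a a') (hb : IsConj b b') : IsConj (a, b) (a', b') := by
  obtain ⟨c, hc⟩ := isConj_iff.1 ha
  obtain ⟨d, hd⟩ := isConj_iff.1 hb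
  exact isConj_iff.2 ⟨(c, d), by simp [hc, hd]⟩

theorem semiconjBy_mul_add_mul_of_mul_self_eq_neg_one {R : Type*} [Ring R] {a d : R}
    (ha : a * a = -1) (hd : d * d = -1) (x : R) : SemiconjBy (a * x + x * d) d a := by
  unfold SemiconjBy
  calc (a * x + x * d) * d = a * x * d + x * (d * d) := by noncomm_ring
    _ = a * x * d + (a * a) * x := by rw [ha, hd]; noncomm_ring
    _ = a * (a * x + x * d) := by noncomm_ring

namespace Matrix.SpecialLinearGroup

variable {K : Type*} [Field K]

-- `a = a⁻¹ = adjugate a` forces `a` to be scalar.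
theorem eq_one_or_eq_neg_one_of_sq_eq_one (h2 : (2 : K) ≠ 0) {a : SL(2, K)} (ha : a ^ 2 = 1) :
    a = 1 ∨ a = -1 := by
  have hinv : a⁻¹ = a := inv_eq_of_mul_eq_one_right (by rwa [← sq])
  rw [SL2_inv_expl] at hinv
  have h := congrArg Subtype.val hinv
  have h01 := congrFun (congrFun h 0) 1
  have h10 := congrFun (congrFun h 1) 0
  have h11 := congrFun (congrFun h 1) 1
  simp only [cons_val', cons_val_zero, cons_val_one, empty_val', cons_val_fin_one] at h01 h10 h11
  have hb : a 0 1 = 0 :=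
    (mul_eq_zero.1 (by linear_combination -h01 : (2 : K) * a 0 1 = 0)).resolve_left h2
  have hc : a 1 0 = 0 :=
    (mul_eq_zero.1 (by linear_combination -h10 : (2 : K) * a 1 0 = 0)).resolve_left h2
  have hdet : a 0 0 * a 1 1 - a 0 1 * a 1 0 = 1 := by rw [← det_fin_two]; exact a.2
  have hsq : a 0 0 ^ 2 = 1 := by linear_combination hdet + a 0 0 * h11 + a 1 0 * hb
  rcases sq_eq_one_iff.1 hsq with hd | hd
  · left; ext i j; fin_cases i <;> fin_cases j <;> simp [hb, hc, hd, ← h11]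
  · right; ext i j; fin_cases i <;> fin_cases j <;> simp [hb, hc, hd, ← h11]

theorem mem_center_iff_eq_one_or_eq_neg_one {a : SL(2, K)} :
    a ∈ Subgroup.center SL(2, K) ↔ a = 1 ∨ a = -1 := by
  constructor
  · intro ha
    obtain ⟨r, hr, hra⟩ := mem_center_iff.1 ha
    rcases (by simpa using hr : r = 1 ∨ r = -1) with rfl | rfl
    · left; ext i j; rw [← hra]; fin_cases i <;> fin_cases j <;> simp
    · right; ext i j; rw [← hra]; fin_cases i <;> fin_cases j <;> simp
  · rintro (rfl | rfl)
    · exact Subgroup.one_mem _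
    · exact Subgroup.mem_center_iff.2 fun g ↦ (Commute.neg_one_left g).eq.symm

theorem neg_one_ne_one_of_two_ne_zero (h2 : (2 : K) ≠ 0) : (-1 : SL(2, K)) ≠ 1 := by
  intro h
  have h00 := congrFun (congrFun (congrArg Subtype.val h) 0) 0
  simp only [coe_neg, coe_one, neg_apply, one_apply_eq] at h00
  exact h2 (by linear_combination -h00)

theorem neg_ne_self_of_two_ne_zero (h2 : (2 : K) ≠ 0) (b : SL(2, K)) : -b ≠ b := by
  intro h
  apply neg_one_ne_one_of_two_ne_zero h2
  simpa using congrArg (· * b⁻¹) h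

theorem notMem_center_of_sq_eq_neg_one (h2 : (2 : K) ≠ 0) {a : SL(2, K)} (ha : a ^ 2 = -1) :
    a ∉ Subgroup.center SL(2, K) := by
  intro hc
  apply neg_one_ne_one_of_two_ne_zero h2
  rcases mem_center_iff_eq_one_or_eq_neg_one.1 hc with rfl | rfl <;> simpa using ha.symm

variable (K) in
def weylElement : SL(2, K) := ⟨!![0, 1; -1, 0], by simp [det_fin_two_of]⟩

theorem coe_weylElement : (weylElement K : Matrix (Fin 2) (Fin 2) K) = !![0, 1; -1, 0] := rfl

theorem weylElement_sq : weylElement K ^ 2 = -1 := by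
  ext i j
  rw [coe_pow, coe_weylElement, coe_neg, coe_one]
  fin_cases i <;> fin_cases j <;> simp [sq]

theorem isConj_of_mul_eq_mul_of_det_ne_zero [IsAlgClosed K] {n : Type*} [Fintype n]
    [DecidableEq n] [Nonempty n] {a b : SpecialLinearGroup n K} {P : Matrix n n K}
    (hP : P.det ≠ 0) (h : P * a = b * P) : IsConj a b := by
  obtain ⟨s, hs⟩ := IsAlgClosed.exists_pow_nat_eq P.det⁻¹ (Fintype.card_pos (α := n))
  let Q : SpecialLinearGroup n K := ⟨s • P, by rw [det_smul, hs, inv_mul_cancel₀ hP]⟩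
  refine isConj_iff.2 ⟨Q, mul_inv_eq_of_eq_mul (Subtype.ext ?_)⟩
  change s • P * (a : Matrix n n K) = b * (s • P)
  rw [smul_mul_assoc, mul_smul_comm, h]

theorem exists_det_mul_add_mul_weylElement_ne_zero (h2 : (2 : K) ≠ 0) (a : SL(2, K)) :
    ∃ x : Matrix (Fin 2) (Fin 2) K, (a * x + x * weylElement K).det ≠ 0 := by
  have hdet : a 0 0 * a 1 1 - a 0 1 * a 1 0 = 1 := by rw [← det_fin_two]; exact a.2
  have e1 : (a : Matrix (Fin 2) (Fin 2) K) * 1 + 1 * (weylElement K : Matrix (Fin 2) (Fin 2) K) =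
      !![a 0 0, a 0 1 + 1; a 1 0 - 1, a 1 1] := by
    ext i j; fin_cases i <;> fin_cases j <;> simp [coe_weylElement, sub_eq_add_neg]
  have ez : (a : Matrix (Fin 2) (Fin 2) K) * !![1, 0; 0, -1] +
      !![1, 0; 0, -1] * (weylElement K : Matrix (Fin 2) (Fin 2) K) =
      !![a 0 0, 1 - a 0 1; a 1 0 + 1, -a 1 1] := by
    ext i j
    fin_cases i <;> fin_cases j <;>
      simp [coe_weylElement, mul_apply, Fin.sum_univ_two, neg_add_eq_sub]
  by_contra! h
  have h1 := h 1
  have hz := h !![1, 0; 0, -1]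
  rw [e1, det_fin_two_of] at h1
  rw [ez, det_fin_two_of] at hz
  -- the two determinants are `2 + a 0 1 - a 1 0` and `-2 + a 0 1 - a 1 0`
  exact h2 (mul_self_eq_zero.1 (by linear_combination h1 - hz - 2 * hdet))

theorem isConj_weylElement [IsAlgClosed K] (h2 : (2 : K) ≠ 0) {a : SL(2, K)} (ha : a ^ 2 = -1) :
    IsConj (weylElement K) a := by
  obtain ⟨x, hx⟩ := exists_det_mul_add_mul_weylElement_ne_zero h2 a
  refine isConj_of_mul_eq_mul_of_det_ne_zero hx
    (semiconjBy_mul_add_mul_of_mul_self_eq_neg_one ?_ ?_ x)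
  · rw [← coe_mul, ← sq, ha, coe_neg, coe_one]
  · rw [← coe_mul, ← sq, weylElement_sq, coe_neg, coe_one]

end Matrix.SpecialLinearGroup

abbrev SL2CentralProduct (K : Type*) [Field K] :=
  (SL(2, K) × SL(2, K)) ⧸ Subgroup.zpowers ((-1, -1) : SL(2, K) × SL(2, K))

namespace SL2CentralProduct

open Matrix.SpecialLinearGroup

variable {K : Type*} [Field K]

theorem mk_eq_one_iff {x : SL(2, K) × SL(2, K)} :
    (x : SL2CentralProduct K) = 1 ↔ x = 1 ∨ x = (-1, -1) := by
  rw [QuotientGroup.eq_one_iff]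
  exact Subgroup.mem_zpowers_iff_of_sq_eq_one (by ext <;> simp)

theorem mk_eq_mk_iff {x y : SL(2, K) × SL(2, K)} :
    (x : SL2CentralProduct K) = y ↔ y = x ∨ y = x * (-1, -1) := by
  rw [QuotientGroup.eq, Subgroup.mem_zpowers_iff_of_sq_eq_one (by ext <;> simp),
    inv_mul_eq_one, inv_mul_eq_iff_eq_mul, eq_comm]

theorem mk_sq_eq_one_iff {a b : SL(2, K)} :
    ((a, b) : SL2CentralProduct K) ^ 2 = 1 ↔
      a ^ 2 = 1 ∧ b ^ 2 = 1 ∨ a ^ 2 = -1 ∧ b ^ 2 = -1 := by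
  rw [← QuotientGroup.mk_pow, mk_eq_one_iff, Prod.pow_mk, Prod.ext_iff, Prod.ext_iff]
  rfl

theorem mk_mem_center_iff (h2 : (2 : K) ≠ 0) {a b : SL(2, K)} :
    ((a, b) : SL2CentralProduct K) ∈ Subgroup.center (SL2CentralProduct K) ↔
      a ∈ Subgroup.center SL(2, K) ∧ b ∈ Subgroup.center SL(2, K) := by
  simp only [Subgroup.mem_center_iff]
  constructor
  · intro h
    constructor
    · intro g
      rcases mk_eq_mk_iff.1 (h ((g, 1) : SL(2, K) × SL(2, K))) with h' | h' <;>
        simp only [Prod.mk_mul_mk, mul_one, one_mul, mul_neg, Prod.mk.injEq, and_true] at h'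
      · exact h'.symm
      · exact absurd h'.2.symm (neg_ne_self_of_two_ne_zero h2 b)
    · intro g
      rcases mk_eq_mk_iff.1 (h ((1, g) : SL(2, K) × SL(2, K))) with h' | h' <;>
        simp only [Prod.mk_mul_mk, mul_one, one_mul, mul_neg, Prod.mk.injEq, true_and] at h'
      · exact h'.symm
      · exact absurd h'.1.symm (neg_ne_self_of_two_ne_zero h2 a)
  · rintro ⟨ha, hb⟩ y
    obtain ⟨⟨g, g'⟩, rfl⟩ := QuotientGroup.mk_surjective y
    rw [← QuotientGroup.mk_mul, ← QuotientGroup.mk_mul, Prod.mk_mul_mk, Prod.mk_mul_mk, ha, hb]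

theorem mk_mem_center_of_sq_eq_one (h2 : (2 : K) ≠ 0) {a b : SL(2, K)} (ha : a ^ 2 = 1)
    (hb : b ^ 2 = 1) : ((a, b) : SL2CentralProduct K) ∈ Subgroup.center (SL2CentralProduct K) :=
  (mk_mem_center_iff h2).2
    ⟨mem_center_iff_eq_one_or_eq_neg_one.2 (eq_one_or_eq_neg_one_of_sq_eq_one h2 ha),
      mem_center_iff_eq_one_or_eq_neg_one.2 (eq_one_or_eq_neg_one_of_sq_eq_one h2 hb)⟩

theorem orderOf_mk_neg_one_one (h2 : (2 : K) ≠ 0) :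
    orderOf (((-1, 1) : SL(2, K) × SL(2, K)) : SL2CentralProduct K) = 2 := by
  refine orderOf_eq_prime_iff.2 ⟨mk_sq_eq_one_iff.2 (Or.inl ⟨by simp, by simp⟩), ?_⟩
  rw [Ne, mk_eq_one_iff]
  have := neg_one_ne_one_of_two_ne_zero h2
  simp [this, this.symm]

theorem mk_neg_one_one_mem_center (h2 : (2 : K) ≠ 0) :
    (((-1, 1) : SL(2, K) × SL(2, K)) : SL2CentralProduct K) ∈
      Subgroup.center (SL2CentralProduct K) :=
  mk_mem_center_of_sq_eq_one h2 (by simp) (by simp)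

theorem orderOf_mk_weylElement (h2 : (2 : K) ≠ 0) :
    orderOf ((weylElement K, weylElement K) : SL2CentralProduct K) = 2 := by
  refine orderOf_eq_prime_iff.2 ⟨mk_sq_eq_one_iff.2 (Or.inr ⟨weylElement_sq, weylElement_sq⟩), ?_⟩
  obtain ⟨hw1, hw2⟩ := not_or.1 (mt mem_center_iff_eq_one_or_eq_neg_one.2
    (notMem_center_of_sq_eq_neg_one h2 (weylElement_sq (K := K))))
  rw [Ne, mk_eq_one_iff]
  simp [Prod.ext_iff, hw1, hw2]

theorem mk_weylElement_notMem_center (h2 : (2 : K) ≠ 0) :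
    ((weylElement K, weylElement K) : SL2CentralProduct K) ∉
      Subgroup.center (SL2CentralProduct K) :=
  fun h ↦ notMem_center_of_sq_eq_neg_one h2 weylElement_sq ((mk_mem_center_iff h2).1 h).1

theorem eq_mk_neg_one_one_of_orderOf_eq_two_of_mem_center (h2 : (2 : K) ≠ 0)
    {x : SL2CentralProduct K} (hx : orderOf x = 2)
    (hxc : x ∈ Subgroup.center (SL2CentralProduct K)) :
    x = (((-1, 1) : SL(2, K) × SL(2, K)) : SL2CentralProduct K) := by
  obtain ⟨⟨a, b⟩, rfl⟩ := QuotientGroup.mk_surjective x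
  rcases mk_sq_eq_one_iff.1 (hx ▸ pow_orderOf_eq_one _) with ⟨ha, hb⟩ | ⟨ha, _⟩
  · have hx1 : ((a, b) : SL2CentralProduct K) ≠ 1 := fun h ↦ by simp [h] at hx
    rcases eq_one_or_eq_neg_one_of_sq_eq_one h2 ha with rfl | rfl <;>
      rcases eq_one_or_eq_neg_one_of_sq_eq_one h2 hb with rfl | rfl
    · exact absurd (mk_eq_one_iff.2 (Or.inl rfl)) hx1
    · exact mk_eq_mk_iff.2 (Or.inr (by ext <;> simp))
    · rfl
    · exact absurd (mk_eq_one_iff.2 (Or.inr rfl)) hx1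
  · exact absurd ((mk_mem_center_iff h2).1 hxc).1 (notMem_center_of_sq_eq_neg_one h2 ha)

theorem isConj_mk_weylElement [IsAlgClosed K] (h2 : (2 : K) ≠ 0) {x : SL2CentralProduct K}
    (hx : orderOf x = 2) (hxc : x ∉ Subgroup.center (SL2CentralProduct K)) :
    IsConj ((weylElement K, weylElement K) : SL2CentralProduct K) x := by
  obtain ⟨⟨a, b⟩, rfl⟩ := QuotientGroup.mk_surjective x
  rcases mk_sq_eq_one_iff.1 (hx ▸ pow_orderOf_eq_one _) with ⟨ha, hb⟩ | ⟨ha, hb⟩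
  · exact absurd (mk_mem_center_of_sq_eq_one h2 ha hb) hxc
  · exact (QuotientGroup.mk' _).map_isConj
      (Prod.isConj_mk (isConj_weylElement h2 ha) (isConj_weylElement h2 hb))

end SL2CentralProduct

open SL2CentralProduct Matrix.SpecialLinearGroup in
/-- In the central product `H(K) = (SL₂(K) × SL₂(K))/⟨(-I,-I)⟩` over an
algebraically closed field of characteristic `≠ 2`, the image `z` of `(-I, I)` is the
unique central element of order 2, non-central elements of order 2 exist, and any two of
them are conjugate; so `H(K)` has exactly two conjugacy classes of involutions. -/
theorem central_product_involution_classes (K : Type*) [Field K] [IsAlgClosed K]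
    (hchar : ringChar K ≠ 2) :
    letI H := (SL(2, K) × SL(2, K)) ⧸ Subgroup.zpowers ((-1, -1) : SL(2, K) × SL(2, K))
    letI π : SL(2, K) × SL(2, K) →* H :=
      QuotientGroup.mk' (Subgroup.zpowers ((-1, -1) : SL(2, K) × SL(2, K)))
    letI z := π (-1, 1)
    (orderOf z = 2 ∧ z ∈ Subgroup.center H) ∧
    (∀ x : H, orderOf x = 2 → x ∈ Subgroup.center H → x = z) ∧
    (∃ x : H, orderOf x = 2 ∧ x ∉ Subgroup.center H) ∧
    (∀ x y : H, orderOf x = 2 → orderOf y = 2 →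
      x ∉ Subgroup.center H → y ∉ Subgroup.center H → IsConj x y) := by
  have h2 : (2 : K) ≠ 0 := Ring.two_ne_zero hchar
  exact ⟨⟨orderOf_mk_neg_one_one h2, mk_neg_one_one_mem_center h2⟩,
    fun x hx hxc ↦ eq_mk_neg_one_one_of_orderOf_eq_two_of_mem_center h2 hx hxc,
    ⟨_, orderOf_mk_weylElement h2, mk_weylElement_notMem_center h2⟩,
    fun x y hx hy hxc hyc ↦ (isConj_mk_weylElement h2 hx hxc).symm.trans
      (isConj_mk_weylElement h2 hy hyc)⟩
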